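/- arXiv:2401.05442 — 3 statements merged into one kernel-verified Lean document; each statement's English description precedes it below -/
import Mathlib

section
/- Let f : ℝ^d → ℝ be twice continuously differentiable on a product domain (e.g., all of ℝ^d) and let i ≠ j be coordinate indices. If ∂²f/∂xᵢ∂xⱼ(x) = 0 for all x, then there exist functions f₁, f₂ such that f(x) = f₁(x_{-i}) + f₂(x_{-j}) for all x, where f₁ does not depend on coordinate i and f₂ does not depend on coordinate j. -/
/-!
Because `∂ⱼ∂ᵢ f = 0`, the partial derivative `∂ᵢ f` does not depend on `xⱼ`. Put
`f₂ x = f (x with xⱼ := 0)` and `f₁ = f - f₂`. Then `f₂` ignores `xⱼ`, and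
`∂ᵢ f₁ x = ∂ᵢ f x - ∂ᵢ f (x with xⱼ := 0) = 0`, so `f₁` ignores `xᵢ`. Both steps rest on the
fact that a function whose derivative along `v` vanishes is constant on the lines `x + 𝕜 v`.
-/

open Function

section LineDeriv

variable {𝕜 E G : Type*} [NontriviallyNormedField 𝕜] [AddCommGroup E] [Module 𝕜 E]
  [NormedAddCommGroup G] [NormedSpace 𝕜 G]

theorem HasLineDerivAt.sub {F₁ F₂ : E → G} {f₁' f₂' : G} {x v : E}
    (h₁ : HasLineDerivAt 𝕜 F₁ f₁' x v) (h₂ : HasLineDerivAt 𝕜 F₂ f₂' x v) :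
    HasLineDerivAt 𝕜 (fun y => F₁ y - F₂ y) (f₁' - f₂') x v :=
  HasDerivAt.sub h₁ h₂

theorem HasLineDerivAt.comp_update {ι : Type*} [DecidableEq ι] {F : (ι → E) → G} {f' : G}
    {x v : ι → E} {j : ι} (c : E) (hv : v j = 0)
    (hF : HasLineDerivAt 𝕜 F f' (update x j c) v) :
    HasLineDerivAt 𝕜 (fun y => F (update y j c)) f' x v := by
  have hshift : ∀ t : 𝕜, update (x + t • v) j c = update x j c + t • v := fun t => by
    ext l
    rcases eq_or_ne l j with rfl | hl
    · simp [hv]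
    · simp [hl]
  unfold HasLineDerivAt at hF ⊢
  simpa only [hshift] using hF

end LineDeriv

section ConstAlongLine

variable {𝕜 E G : Type*} [RCLike 𝕜] [AddCommGroup E] [Module 𝕜 E]
  [NormedAddCommGroup G] [NormedSpace 𝕜 G]

theorem add_smul_eq_of_hasLineDerivAt_zero {F : E → G} {v : E}
    (hF : ∀ x, HasLineDerivAt 𝕜 F 0 x v) (x : E) (t : 𝕜) : F (x + t • v) = F x := by
  have hderiv : ∀ s : 𝕜, HasDerivAt (fun t => F (x + t • v)) 0 s := fun s => by
    have hs : HasDerivAt (fun t => F (x + s • v + t • v)) 0 (s - s) := by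
      have h0 := hF (x + s • v)
      unfold HasLineDerivAt at h0
      simpa only [sub_self] using h0
    simpa only [add_assoc, ← add_smul, add_sub_cancel] using hs.comp_sub_const s s
  simpa using is_const_of_deriv_eq_zero (fun s => (hderiv s).differentiableAt)
    (fun s => (hderiv s).deriv) t 0

variable {ι : Type*} [DecidableEq ι]

theorem update_eq_of_hasLineDerivAt_single_zero {F : (ι → 𝕜) → G} {k : ι}
    (hF : ∀ x, HasLineDerivAt 𝕜 F 0 x (Pi.single k 1)) (x : ι → 𝕜) (a : 𝕜) :
    F (update x k a) = F x := by
  have hupdate : update x k a = x + (a - x k) • Pi.single k 1 := by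
    ext l
    rcases eq_or_ne l k with rfl | hl
    · simp
    · simp [hl]
  rw [hupdate, add_smul_eq_of_hasLineDerivAt_zero hF]

theorem eq_of_hasLineDerivAt_single_zero {F : (ι → 𝕜) → G} {k : ι}
    (hF : ∀ x, HasLineDerivAt 𝕜 F 0 x (Pi.single k 1)) (x y : ι → 𝕜)
    (hxy : ∀ l, l ≠ k → x l = y l) : F x = F y := by
  have hy : y = update x k (y k) := eq_update_iff.mpr ⟨rfl, fun l hl => (hxy l hl).symm⟩
  rw [hy, update_eq_of_hasLineDerivAt_single_zero hF]

end ConstAlongLine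

/-- If a twice continuously differentiable `f` on `ℝ^d` has identically vanishing mixed
second partial derivative `∂²f/∂xᵢ∂xⱼ` for `i ≠ j`, then `f` decomposes as the sum of a
function not depending on coordinate `i` and a function not depending on coordinate `j`. -/
theorem decomposition_of_mixed_partial_zero {d : ℕ} (f : (Fin d → ℝ) → ℝ)
    (hf : ContDiff ℝ 2 f) (i j : Fin d) (hij : i ≠ j)
    (h : ∀ x : Fin d → ℝ,
      fderiv ℝ (fun y => fderiv ℝ f y (Pi.single i 1)) x (Pi.single j 1) = 0) :
    ∃ f₁ f₂ : (Fin d → ℝ) → ℝ,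
      (∀ x y : Fin d → ℝ, (∀ k, k ≠ i → x k = y k) → f₁ x = f₁ y) ∧
      (∀ x y : Fin d → ℝ, (∀ k, k ≠ j → x k = y k) → f₂ x = f₂ y) ∧
      (∀ x, f x = f₁ x + f₂ x) := by
  have hf_diff : Differentiable ℝ f := hf.differentiable two_ne_zero
  have hpartial_diff : Differentiable ℝ (fun y => fderiv ℝ f y (Pi.single i 1)) :=
    ((hf.fderiv_right one_add_one_eq_two.le).differentiable one_ne_zero).clm_apply
      (differentiable_const _)
  have hpartial_update : ∀ x a, fderiv ℝ f (update x j a) (Pi.single i 1) =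
      fderiv ℝ f x (Pi.single i 1) :=
    update_eq_of_hasLineDerivAt_single_zero fun x => by
      simpa only [h x] using (hpartial_diff x).hasFDerivAt.hasLineDerivAt (Pi.single j 1)
  refine ⟨fun x => f x - f (update x j 0), fun x => f (update x j 0), ?_, ?_, fun x => by ring⟩
  · refine eq_of_hasLineDerivAt_single_zero fun x => ?_
    have hx := (hf_diff x).hasFDerivAt.hasLineDerivAt (Pi.single i 1)
    have hux := ((hf_diff _).hasFDerivAt.hasLineDerivAt (Pi.single i 1)).comp_update (x := x) 0
      (Pi.single_eq_of_ne hij.symm 1)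
    simpa only [hpartial_update, sub_self] using hx.sub hux
  · intro x y hxy
    have hupdate : update x j 0 = update y j 0 :=
      update_eq_iff.mpr ⟨by simp, fun l hl => by simp [hl, hxy l hl]⟩
    exact congrArg f hupdate
end

section
/- Let f : ℝ^d → ℝ be twice continuously differentiable and i ≠ j coordinate indices. The following are equivalent: (1) f(x) = f₁(x_{-i}) + f₂(x_{-j}) for some functions f₁, f₂; (2) ∂f/∂xᵢ(x) does not depend on xⱼ, i.e., ∂f/∂xᵢ(x) = F(x_{-j}) for some function F; (3) ∂²f/∂xᵢ∂xⱼ(x) = 0 for all x. -/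
/-!
A function does not depend on `xⱼ` iff its partial derivative in `xⱼ` vanishes, because along
each coordinate line it is a function of one real variable. Applied to `∂f/∂xᵢ` this gives
(2) ⇔ (3). For (1) ⇔ (2), compare `f` on the `xᵢ`-lines through two points `x, y` that differ
only in `xⱼ`: the difference `f(x + t eᵢ) - f(y + t eᵢ)` is constant in `t` iff `∂f/∂xᵢ` agrees
on the two lines. A decomposition makes the difference equal to `f₁ x - f₁ y`; conversely
`f₁ x := f(x with xᵢ = 0)` and `f₂ := f - f₁` is a decomposition.
-/

open Function

section IndepOfCoord

variable {ι α β : Type*}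

def IndepOfCoord (g : (ι → α) → β) (j : ι) : Prop :=
  ∀ x y : ι → α, (∀ k, k ≠ j → x k = y k) → g x = g y

theorem exists_indepOfCoord_eq_iff {g : (ι → α) → β} {j : ι} :
    (∃ F, IndepOfCoord F j ∧ ∀ x, g x = F x) ↔ IndepOfCoord g j :=
  ⟨fun ⟨_, hF, hgF⟩ => funext hgF ▸ hF, fun h => ⟨g, h, fun _ => rfl⟩⟩

variable [DecidableEq ι]

theorem indepOfCoord_iff_forall_update {g : (ι → α) → β} {j : ι} :
    IndepOfCoord g j ↔ ∀ x t, g (update x j t) = g x := by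
  refine ⟨fun h x t => h _ _ fun k hk => update_of_ne hk t x, fun h x y hxy => ?_⟩
  have hy : update x j (y j) = y := update_eq_iff.mpr ⟨rfl, hxy⟩
  rw [← hy, h]

theorem IndepOfCoord.comp_update {g : (ι → α) → β} {j : ι} (h : IndepOfCoord g j)
    (i : ι) (s : α) : IndepOfCoord (fun x => g (update x i s)) j := by
  intro x y hxy
  refine h _ _ fun k hk => ?_
  rcases eq_or_ne k i with rfl | hki
  · simp only [update_self]
  · simp only [update_of_ne hki, hxy k hk]

theorem indepOfCoord_comp_update_self (g : (ι → α) → β) (i : ι) (s : α) :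
    IndepOfCoord (fun x => g (update x i s)) i :=
  fun _ y hxy => congrArg g <| update_eq_iff.mpr
    ⟨(update_self i s y).symm, fun k hk => (hxy k hk).trans (update_of_ne hk s y).symm⟩

end IndepOfCoord

section Calculus

variable {ι E : Type*} [Fintype ι] [DecidableEq ι] [NormedAddCommGroup E] [NormedSpace ℝ E]

theorem forall_eq_iff_of_hasDerivAt {φ φ' : ℝ → E} (hφ : ∀ t, HasDerivAt φ (φ' t) t) :
    (∀ s t, φ s = φ t) ↔ ∀ t, φ' t = 0 := by
  refine ⟨fun h t => (hφ t).unique ?_, fun h => ?_⟩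
  · exact (hasDerivAt_const t (φ 0)).congr_of_eventuallyEq (.of_forall (h · 0))
  · exact is_const_of_deriv_eq_zero (fun t => (hφ t).differentiableAt)
      fun t => (hφ t).deriv.trans (h t)

theorem hasDerivAt_comp_update {g : (ι → ℝ) → E} {x : ι → ℝ} {i : ι} {t : ℝ}
    (hg : DifferentiableAt ℝ g (update x i t)) :
    HasDerivAt (fun s => g (update x i s)) (fderiv ℝ g (update x i t) (Pi.single i 1)) t :=
  hg.hasFDerivAt.comp_hasDerivAt t (hasDerivAt_update x i t)

theorem indepOfCoord_iff_fderiv_single_eq_zero {g : (ι → ℝ) → E} (hg : Differentiable ℝ g)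
    (j : ι) : IndepOfCoord g j ↔ ∀ x, fderiv ℝ g x (Pi.single j 1) = 0 := by
  have hline (x : ι → ℝ) := forall_eq_iff_of_hasDerivAt fun t =>
    hasDerivAt_comp_update (x := x) (i := j) (t := t) (hg _)
  rw [indepOfCoord_iff_forall_update]
  refine ⟨fun h x => ?_, fun h x t => ?_⟩
  · simpa only [update_eq_self] using
      (hline x).mp (fun s t => (h x s).trans (h x t).symm) (x j)
  · simpa only [update_eq_self] using (hline x).mpr (fun t => h _) t (x j)

theorem sub_comp_update_const_iff {g : (ι → ℝ) → E} (hg : Differentiable ℝ g)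
    (x y : ι → ℝ) (i : ι) :
    (∀ s t, g (update x i s) - g (update y i s) = g (update x i t) - g (update y i t)) ↔
      ∀ t, fderiv ℝ g (update x i t) (Pi.single i 1) =
        fderiv ℝ g (update y i t) (Pi.single i 1) := by
  simp only [← sub_eq_zero (a := fderiv ℝ g _ _)]
  exact forall_eq_iff_of_hasDerivAt fun t =>
    (hasDerivAt_comp_update (hg _)).sub (hasDerivAt_comp_update (hg _))

variable {f : (ι → ℝ) → E} {i j : ι}

theorem indepOfCoord_fderiv_single_of_eq_add (hf : Differentiable ℝ f) (hij : i ≠ j)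
    {f₁ f₂ : (ι → ℝ) → E} (h₁ : IndepOfCoord f₁ i) (h₂ : IndepOfCoord f₂ j)
    (hsum : ∀ x, f x = f₁ x + f₂ x) :
    IndepOfCoord (fun x => fderiv ℝ f x (Pi.single i 1)) j := by
  intro x y hxy
  have hdiff (s : ℝ) : f (update x i s) - f (update y i s) = f₁ x - f₁ y := by
    have h₂' : f₂ (update x i s) = f₂ (update y i s) := h₂.comp_update i s x y hxy
    rw [hsum, hsum, indepOfCoord_iff_forall_update.mp h₁, indepOfCoord_iff_forall_update.mp h₁,
      h₂', add_sub_add_right_eq_sub]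
  have hy : update y i (x i) = y := by rw [hxy i hij, update_eq_self]
  simpa only [update_eq_self, hy] using
    (sub_comp_update_const_iff hf x y i).mp (fun s t => (hdiff s).trans (hdiff t).symm) (x i)

theorem exists_eq_add_of_indepOfCoord_fderiv_single (hf : Differentiable ℝ f) (hij : i ≠ j)
    (hF : IndepOfCoord (fun x => fderiv ℝ f x (Pi.single i 1)) j) :
    ∃ f₁ f₂ : (ι → ℝ) → E, IndepOfCoord f₁ i ∧ IndepOfCoord f₂ j ∧ ∀ x, f x = f₁ x + f₂ x := by
  refine ⟨fun x => f (update x i 0), fun x => f x - f (update x i 0),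
    indepOfCoord_comp_update_self f i 0, fun x y hxy => ?_, fun x => (add_sub_cancel _ _).symm⟩
  have hy : update y i (x i) = y := by rw [hxy i hij, update_eq_self]
  have hconst := (sub_comp_update_const_iff hf x y i).mpr
    (fun t => hF.comp_update i t x y hxy) (x i) 0
  rw [update_eq_self, hy] at hconst
  exact sub_eq_sub_iff_sub_eq_sub.mp hconst

end Calculus

/-- Equivalent criteria for pairwise functional independence of coordinates `i` and `j`
of a twice continuously differentiable function `f : ℝ^d → ℝ`:
(1) additive decomposition avoiding `xᵢ` resp. `xⱼ`;
(2) `∂f/∂xᵢ` does not depend on `xⱼ`;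
(3) the mixed second partial `∂²f/∂xᵢ∂xⱼ` vanishes identically. -/
theorem functional_independence_criteria {d : ℕ} (f : (Fin d → ℝ) → ℝ)
    (hf : ContDiff ℝ 2 f) (i j : Fin d) (hij : i ≠ j) :
    ((∃ f₁ f₂ : (Fin d → ℝ) → ℝ,
        (∀ x y : Fin d → ℝ, (∀ k, k ≠ i → x k = y k) → f₁ x = f₁ y) ∧
        (∀ x y : Fin d → ℝ, (∀ k, k ≠ j → x k = y k) → f₂ x = f₂ y) ∧
        (∀ x, f x = f₁ x + f₂ x)) ↔
      (∃ F : (Fin d → ℝ) → ℝ,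
        (∀ x y : Fin d → ℝ, (∀ k, k ≠ j → x k = y k) → F x = F y) ∧
        (∀ x, fderiv ℝ f x (Pi.single i 1) = F x))) ∧
    ((∃ F : (Fin d → ℝ) → ℝ,
        (∀ x y : Fin d → ℝ, (∀ k, k ≠ j → x k = y k) → F x = F y) ∧
        (∀ x, fderiv ℝ f x (Pi.single i 1) = F x)) ↔
      (∀ x : Fin d → ℝ,
        fderiv ℝ (fun y => fderiv ℝ f y (Pi.single i 1)) x (Pi.single j 1) = 0)) := by
  have hf_diff : Differentiable ℝ f := hf.differentiable (by norm_num)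
  have hpartial_diff : Differentiable ℝ fun y => fderiv ℝ f y (Pi.single i 1) :=
    ((hf.fderiv_right (m := 1) (by norm_num)).differentiable (by norm_num)).clm_apply
      (differentiable_const _)
  have hcrit₂_iff :
      (∃ F : (Fin d → ℝ) → ℝ, IndepOfCoord F j ∧ ∀ x, fderiv ℝ f x (Pi.single i 1) = F x) ↔
      IndepOfCoord (fun x => fderiv ℝ f x (Pi.single i 1)) j :=
    exists_indepOfCoord_eq_iff
  refine ⟨Iff.trans ⟨?_, exists_eq_add_of_indepOfCoord_fderiv_single hf_diff hij⟩
      hcrit₂_iff.symm,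
    hcrit₂_iff.trans (indepOfCoord_iff_fderiv_single_eq_zero hpartial_diff j)⟩
  rintro ⟨f₁, f₂, h₁, h₂, hsum⟩
  exact indepOfCoord_fderiv_single_of_eq_add hf_diff hij h₁ h₂ hsum
end

section
/- (Function Decomposition via FGMs, discrete case) Let X = X₁ × ... × X_d be a finite product of finite nonempty sets, f : X → ℝ, and let G be a graph on {1,...,d} such that for every non-adjacent pair i ≠ j, there exist functions g, h with f(x) = g(x_{-i}) + h(x_{-j}) for all x. Then there exist functions f_C : X_C → ℝ, one for each clique C of G, such that f(x) = Σ_{C ∈ cliques(G)} f_C(x_C) for all x. -/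
open Finset

/-- Auxiliary: if `g` does not depend on coordinate `i` and `i ∈ C`, the signed sum of `g`
over patched points vanishes. -/
lemma aux_sum_zero_FGM {d : ℕ} {X : Fin d → Type*} (z x : ∀ i, X i)
    (C : Finset (Fin d)) (i : Fin d) (hi : i ∈ C)
    (g : (∀ i, X i) → ℝ)
    (hg : ∀ x y : ∀ i, X i, (∀ k, k ≠ i → x k = y k) → g x = g y) :
    ∑ B ∈ C.powerset, (-1 : ℝ) ^ (C.card + B.card)
        * g (fun k => if k ∈ B then x k else z k) = 0 := by
  classical
  set inv : Finset (Fin d) → Finset (Fin d) :=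
    fun B => if i ∈ B then B.erase i else insert i B with hinv
  have hmem : ∀ B ∈ C.powerset, inv B ∈ C.powerset := by
    intro B hB
    rw [Finset.mem_powerset] at hB ⊢
    by_cases hiB : i ∈ B
    · simpa [hinv, hiB] using (Finset.erase_subset i B).trans hB
    · simpa [hinv, hiB] using Finset.insert_subset hi hB
  have hcancel : ∀ B ∈ C.powerset,
      (-1 : ℝ) ^ (C.card + B.card) * g (fun k => if k ∈ B then x k else z k)
      + (-1 : ℝ) ^ (C.card + (inv B).card)
        * g (fun k => if k ∈ inv B then x k else z k) = 0 := by
    intro B hB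
    by_cases hiB : i ∈ B
    · simp only [hinv, hiB, if_true]
      have hgeq : g (fun k => if k ∈ B then x k else z k)
          = g (fun k => if k ∈ B.erase i then x k else z k) := by
        apply hg
        intro k hk
        simp [Finset.mem_erase, hk]
      have h1 : 1 ≤ B.card := Finset.card_pos.mpr ⟨i, hiB⟩
      have hcard : B.card = (B.erase i).card + 1 := by
        rw [Finset.card_erase_of_mem hiB]; omega
      rw [← hgeq, hcard, ← add_assoc, pow_succ]
      ring
    · simp only [hinv, hiB, if_false]
      have hgeq : g (fun k => if k ∈ B then x k else z k)
          = g (fun k => if k ∈ insert i B then x k else z k) := by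
        apply hg
        intro k hk
        simp [Finset.mem_insert, hk]
      have hcard : (insert i B).card = B.card + 1 := Finset.card_insert_of_notMem hiB
      rw [← hgeq, hcard, ← add_assoc, pow_succ]
      ring
  have hne : ∀ B ∈ C.powerset, inv B ≠ B := by
    intro B _ h
    by_cases hiB : i ∈ B
    · simp only [hinv, hiB, if_true] at h
      rw [← h] at hiB
      exact Finset.notMem_erase i B hiB
    · simp only [hinv, hiB, if_false] at h
      exact hiB (h ▸ Finset.mem_insert_self i B)
  have hinvinv : ∀ B ∈ C.powerset, inv (inv B) = B := by
    intro B _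
    by_cases hiB : i ∈ B
    · simp [hinv, hiB, Finset.notMem_erase, Finset.insert_erase hiB]
    · simp [hinv, hiB, Finset.mem_insert_self, Finset.erase_insert hiB]
  exact Finset.sum_involution (fun B hB => inv B) hcancel
    (fun B hB _ => hne B hB) (fun B hB => hmem B hB) (fun B hB => hinvinv B hB)

/-- Function decomposition via functional graphical models (discrete case): if for every
non-adjacent pair `i ≠ j` of the graph `G` the function `f` decomposes as a sum of a
function not depending on coordinate `i` and one not depending on coordinate `j`, then `f`
is a sum of clique-local functions. -/
theorem function_decomposition_FGM {d : ℕ} {X : Fin d → Type*}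
    [∀ i, Fintype (X i)] [∀ i, Nonempty (X i)]
    (f : (∀ i, X i) → ℝ) (G : SimpleGraph (Fin d))
    (hFGM : ∀ i j : Fin d, i ≠ j → ¬ G.Adj i j →
      ∃ g h : (∀ i, X i) → ℝ,
        (∀ x y : ∀ i, X i, (∀ k, k ≠ i → x k = y k) → g x = g y) ∧
        (∀ x y : ∀ i, X i, (∀ k, k ≠ j → x k = y k) → h x = h y) ∧
        (∀ x, f x = g x + h x)) :
    ∃ fC : Finset (Fin d) → ((∀ i, X i) → ℝ),
      (∀ C : Finset (Fin d),
        ∀ x y : ∀ i, X i, (∀ i ∈ C, x i = y i) → fC C x = fC C y) ∧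
      (∀ C : Finset (Fin d), ¬ G.IsClique (C : Set (Fin d)) → fC C = 0) ∧
      (∀ x, f x = ∑ C : Finset (Fin d), fC C x) := by
  classical
  obtain ⟨z⟩ : Nonempty (∀ i, X i) := ⟨fun i => Classical.arbitrary _⟩
  refine ⟨fun C x => ∑ B ∈ C.powerset,
      (-1 : ℝ) ^ (C.card + B.card) * f (fun k => if k ∈ B then x k else z k), ?_, ?_, ?_⟩
  · -- locality
    intro C x y hxy
    apply Finset.sum_congr rfl
    intro B hB
    rw [Finset.mem_powerset] at hB
    congr 1
    congr 1
    funext k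
    by_cases hk : k ∈ B
    · simp [hk, hxy k (hB hk)]
    · simp [hk]
  · -- non-cliques vanish
    intro C hC
    simp only [SimpleGraph.isClique_iff, Set.Pairwise] at hC
    push_neg at hC
    obtain ⟨i, hiC, j, hjC, hij, hnadj⟩ := hC
    simp only [Finset.mem_coe] at hiC hjC
    obtain ⟨g, h, hg, hh, hf⟩ := hFGM i j hij hnadj
    funext x
    simp only [hf, mul_add, Finset.sum_add_distrib, Pi.zero_apply]
    rw [aux_sum_zero_FGM z x C i hiC g hg, aux_sum_zero_FGM z x C j hjC h hh, add_zero]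
  · -- the sum identity
    intro x
    have hswap : ∑ C : Finset (Fin d), ∑ B ∈ C.powerset,
        (-1 : ℝ) ^ (C.card + B.card) * f (fun k => if k ∈ B then x k else z k)
        = ∑ B : Finset (Fin d), ∑ C ∈ Finset.univ.filter (fun C => B ⊆ C),
          (-1 : ℝ) ^ (C.card + B.card) * f (fun k => if k ∈ B then x k else z k) := by
      apply Finset.sum_comm'
      intro C B
      simp [Finset.mem_powerset]
    rw [hswap]
    have hinner : ∀ B : Finset (Fin d),
        ∑ C ∈ Finset.univ.filter (fun C => B ⊆ C),
          (-1 : ℝ) ^ (C.card + B.card) * f (fun k => if k ∈ B then x k else z k)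
        = (if B = Finset.univ then 1 else 0)
            * f (fun k => if k ∈ B then x k else z k) := by
      intro B
      rw [← Finset.sum_mul]
      congr 1
      have hbij : ∑ C ∈ Finset.univ.filter (fun C => B ⊆ C), (-1 : ℝ) ^ (C.card + B.card)
          = ∑ D ∈ Bᶜ.powerset, (-1 : ℝ) ^ D.card := by
        apply Finset.sum_nbij' (fun C => C \ B) (fun D => B ∪ D)
        · intro C hC
          rw [Finset.mem_filter] at hC
          rw [Finset.mem_powerset]
          intro k hk
          rw [Finset.mem_sdiff] at hk
          simp [hk.2]
        · intro D hD
          simp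
        · intro C hC
          rw [Finset.mem_filter] at hC
          exact Finset.union_sdiff_of_subset hC.2
        · intro D hD
          rw [Finset.mem_powerset] at hD
          rw [Finset.union_sdiff_left]
          exact Finset.sdiff_eq_self_of_disjoint (Finset.disjoint_left.mpr
            fun a ha => by simpa using hD ha)
        · intro C hC
          rw [Finset.mem_filter] at hC
          have hle := Finset.card_le_card hC.2
          have : C.card = B.card + (C \ B).card := by
            rw [Finset.card_sdiff_of_subset hC.2]
            omega
          rw [this]
          rw [show B.card + (C \ B).card + B.card = (C \ B).card + 2 * B.card by ring]
          rw [pow_add, pow_mul]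
          norm_num
      rw [hbij]
      have : ((∑ D ∈ Bᶜ.powerset, (-1 : ℤ) ^ D.card : ℤ) : ℝ)
          = ∑ D ∈ Bᶜ.powerset, (-1 : ℝ) ^ D.card := by push_cast; rfl
      rw [← this, Finset.sum_powerset_neg_one_pow_card]
      by_cases hB : B = Finset.univ
      · simp [hB]
      · have : Bᶜ ≠ ∅ := by
          intro hc
          exact hB (by simpa [Finset.compl_eq_empty_iff] using hc)
        simp [this, hB]
    rw [Finset.sum_congr rfl fun B _ => hinner B]
    simp only [ite_mul, one_mul, zero_mul]
    rw [Finset.sum_ite_eq' Finset.univ Finset.univ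
      (fun B => f (fun k => if k ∈ B then x k else z k))]
    simp
end
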